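/- In NSym, H₁ · 𝔖_{(1,3)} = 𝔖_{(1,1,3)} − 𝔖_{(2,2,1)} − 𝔖_{(3,2)}, showing that left multiplication by H-generators does not expand positively in the immaculate basis. -/

import Mathlib

/-- `NSym`, the free associative `ℚ`-algebra on generators `H₁, H₂, …`,
modelled as the monoid algebra of the free monoid on positive integers. -/
abbrev NSym := MonoidAlgebra ℚ (FreeMonoid {i : ℕ // 0 < i})

/-- The generator `H_i` (with the convention `H_0 = 1`). -/
noncomputable def Hn : ℕ → NSym := fun i =>
  if h : 0 < i then MonoidAlgebra.of ℚ (FreeMonoid {i : ℕ // 0 < i}) (FreeMonoid.of ⟨i, h⟩)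
  else 1

/-- `H` indexed by an integer: `H_m = 0` for `m < 0`. -/
noncomputable def Hz : ℤ → NSym := fun m => if m < 0 then 0 else Hn m.toNat

/-- `H_α = H_{α₁} ⋯ H_{α_m}`. -/
noncomputable def Hprod (α : List ℕ) : NSym := (α.map Hn).prod

/-- The immaculate function of an integer tuple, via the noncommutative
Jacobi–Trudi formula `𝔖_α = Σ_σ sgn(σ) H_{α₁+σ(1)-1} ⋯ H_{α_m+σ(m)-m}`. -/
noncomputable def imm (α : List ℤ) : NSym :=
  ∑ σ : Equiv.Perm (Fin α.length),
    (Equiv.Perm.sign σ : ℤ) •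
      (List.ofFn (fun i => Hz (α.get i + ((σ i : ℕ) : ℤ) - ((i : ℕ) : ℤ)))).prod

/-- The immaculate function of a composition. -/
noncomputable def immN (α : List ℕ) : NSym := imm (α.map (fun a => (a : ℤ)))

/-! Expanding the Jacobi–Trudi sums over `S₂` and `S₃` and using `H₀ = 1`, `H₋₁ = 0`, both sides
reduce to `H₁H₁H₃ - H₁H₂H₂`: the identity is a cancellation of words in the free algebra. -/

open Equiv

theorem sum_perm_fin_two {M : Type*} [AddCommMonoid M] (f : Perm (Fin 2) → M) :
    ∑ σ, f σ = f 1 + f (swap 0 1) := by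
  rw [show (Finset.univ : Finset (Perm (Fin 2))) = {1, swap 0 1} by decide,
    Finset.sum_pair (by decide)]

theorem sum_perm_fin_three {M : Type*} [AddCommMonoid M] (f : Perm (Fin 3) → M) :
    ∑ σ, f σ = f 1 + f (swap 0 1) + f (swap 0 2) + f (swap 1 2)
      + f (swap 0 1 * swap 1 2) + f (swap 1 2 * swap 0 1) := by
  rw [show (Finset.univ : Finset (Perm (Fin 3))) =
      {1, swap 0 1, swap 0 2, swap 1 2, swap 0 1 * swap 1 2, swap 1 2 * swap 0 1} by decide]
  repeat rw [Finset.sum_insert (by decide)]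
  rw [Finset.sum_singleton]
  abel

theorem Hz_zero : Hz 0 = 1 := rfl

theorem Hz_of_neg {m : ℤ} (hm : m < 0) : Hz m = 0 := if_pos hm

theorem imm_pair (a b : ℤ) : imm [a, b] = Hz a * Hz b - Hz (a + 1) * Hz (b - 1) := by
  rw [imm]
  refine (sum_perm_fin_two _).trans ?_
  simp [List.ofFn_succ, sub_eq_add_neg]

theorem imm_triple (a b c : ℤ) : imm [a, b, c] =
    Hz a * Hz b * Hz c - Hz (a + 1) * Hz (b - 1) * Hz c - Hz (a + 2) * Hz b * Hz (c - 2)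
      - Hz a * Hz (b + 1) * Hz (c - 1) + Hz (a + 1) * Hz (b + 1) * Hz (c - 2)
      + Hz (a + 2) * Hz (b - 1) * Hz (c - 1) := by
  rw [imm]
  refine (sum_perm_fin_three _).trans ?_
  simp [List.ofFn_succ, Perm.sign_mul, Perm.mul_apply, swap_apply_def, sub_eq_add_neg,
    add_assoc, mul_assoc]

/-- `H₁ · 𝔖_{(1,3)} = 𝔖_{(1,1,3)} - 𝔖_{(2,2,1)} - 𝔖_{(3,2)}`: left
multiplication by the `H`-generators is not immaculate-positive. -/
theorem stmt_19 :
    Hn 1 * imm [(1 : ℤ), 3] =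
      imm [(1 : ℤ), 1, 3] - imm [(2 : ℤ), 2, 1] - imm [(3 : ℤ), 2] := by
  rw [imm_pair, imm_triple, imm_triple, imm_pair, show Hn 1 = Hz 1 from rfl]
  norm_num only
  rw [Hz_zero, Hz_of_neg (m := -1) (by norm_num)]
  noncomm_ring
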